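/- arXiv:1305.1144 — 2 statements merged into one kernel-verified Lean document; each statement's English description precedes it below -/
import Mathlib

section
/- Let 1 ≤ k ≤ m ≤ n, let P ∈ L(V) be positive semidefinite with an orthonormal basis of eigenvectors e_1, …, e_n and corresponding eigenvalues ν_1 ≥ ⋯ ≥ ν_n, and let α ∈ Γ_{m,n}. Then D^k K_χ(P)(I, …, I) applied to e*_α := K_χ(e_{α(1)}⊗⋯⊗e_{α(m)}) equals k! · p_{m−k}(ν_α) · e*_α; in particular, whenever e*_α ≠ 0, it is an eigenvector of D^k K_χ(P)(I, …, I) with eigenvalue λ(α) := k! · p_{m−k}(ν_α). -/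
set_option synthInstance.maxHeartbeats 1000000
set_option maxHeartbeats 1000000

noncomputable section

/-- `V = ℂⁿ` with the standard inner product. -/
abbrev Vec (n : ℕ) : Type := EuclideanSpace ℂ (Fin n)

/-- `L(V)`, the space of linear operators on `V`, with the operator norm. -/
abbrev Op (n : ℕ) : Type := Vec n →L[ℂ] Vec n

/-- Coordinate model of the `m`-th tensor power `⊗^m V` of `V = ℂⁿ`:
functions on multi-indices `Γ_{m,n}`, with the inner product making the pure tensors of
orthonormal vectors orthonormal. -/
abbrev TVec (n m : ℕ) : Type := EuclideanSpace ℂ (Fin m → Fin n)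

abbrev TOp (n m : ℕ) : Type := TVec n m →L[ℂ] TVec n m

/-- The `(a,b)` matrix entry of an operator on `ℂⁿ` in the standard basis. -/
def entry {n : ℕ} (S : Op n) (a b : Fin n) : ℂ := S (EuclideanSpace.single b 1) a

/-- The tensor product `T 0 ⊗ T 1 ⊗ ⋯ ⊗ T (m-1)` of a family of operators,
acting on `⊗^m V` (coordinate model). -/
def tensorFam {n m : ℕ} (T : Fin m → Op n) : TOp n m :=
  Matrix.toEuclideanCLM (𝕜 := ℂ)
    (Matrix.of fun α β : Fin m → Fin n => ∏ i, entry (T i) (α i) (β i))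

/-- The `m`-th tensor power `⊗^m T` of the operator `T`. -/
def tensorPow (n m : ℕ) (T : Op n) : TOp n m := tensorFam fun _ => T

/-- The symmetrized tensor product `X^1 ⊗̃ ⋯ ⊗̃ X^m = (1/m!) ∑_σ X^{σ(1)} ⊗ ⋯ ⊗ X^{σ(m)}`. -/
def symTensor {n m : ℕ} (X : Fin m → Op n) : TOp n m :=
  ((m.factorial : ℂ))⁻¹ • ∑ σ : Equiv.Perm (Fin m), tensorFam (X ∘ σ)

/-- The permutation operator `P(σ)` on `⊗^m V`, `P(σ)(v_1 ⊗ ⋯ ⊗ v_m) = v_{σ⁻¹(1)} ⊗ ⋯ ⊗ v_{σ⁻¹(m)}`. -/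
def permOp (n m : ℕ) (σ : Equiv.Perm (Fin m)) : TOp n m :=
  Matrix.toEuclideanCLM (𝕜 := ℂ)
    (Matrix.of fun α β : Fin m → Fin n => if β = α ∘ σ then 1 else 0)

/-- The symmetrizer `K_χ = (χ(id)/m!) ∑_σ χ(σ) P(σ)` associated with a character `χ` of `S_m`. -/
def Kproj (n m : ℕ) (χ : Equiv.Perm (Fin m) → ℂ) : TOp n m :=
  (χ 1 / (m.factorial : ℂ)) • ∑ σ : Equiv.Perm (Fin m), χ σ • permOp n m σ

/-- The symmetry class of tensors `V_χ`, the range of `K_χ`. -/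
def symClass (n m : ℕ) (χ : Equiv.Perm (Fin m) → ℂ) : Submodule ℂ (TVec n m) :=
  LinearMap.range (Kproj n m χ : TVec n m →ₗ[ℂ] TVec n m)

/-- `K_χ(T)`, the restriction of `⊗^m T` to the invariant subspace `V_χ`,
realized as `Q* ∘ (⊗^m T) ∘ Q` where `Q : V_χ → ⊗^m V` is the inclusion. -/
def Kmap (n m : ℕ) (χ : Equiv.Perm (Fin m) → ℂ) (T : Op n) :
    symClass n m χ →L[ℂ] symClass n m χ :=
  (Submodule.orthogonalProjectionOnto (symClass n m χ)).comp
    ((tensorPow n m T).comp (symClass n m χ).subtypeL)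

/-- `X^1 ∗ ⋯ ∗ X^m`, the restriction of `X^1 ⊗̃ ⋯ ⊗̃ X^m` to the invariant subspace `V_χ`. -/
def starProd (n m : ℕ) (χ : Equiv.Perm (Fin m) → ℂ) (X : Fin m → Op n) :
    symClass n m χ →L[ℂ] symClass n m χ :=
  (Submodule.orthogonalProjectionOnto (symClass n m χ)).comp
    ((symTensor X).comp (symClass n m χ).subtypeL)

/-- `χ` is the character of an irreducible complex representation of `S_m`. -/
def IsIrreducibleCharacter (m : ℕ) (χ : Equiv.Perm (Fin m) → ℂ) : Prop :=
  ∃ (d : ℕ) (ρ : Representation ℂ (Equiv.Perm (Fin m)) (Fin d → ℂ)),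
    0 < d ∧
    (∀ p : Submodule ℂ (Fin d → ℂ), (∀ g x, x ∈ p → ρ g x ∈ p) → p = ⊥ ∨ p = ⊤) ∧
    ∀ g, χ g = LinearMap.trace ℂ (Fin d → ℂ) (ρ g)

/-- `T` has singular values `ν 0 ≥ ν 1 ≥ ⋯ ≥ ν (n-1)` (singular value decomposition). -/
def HasSingularValues {n : ℕ} (T : Op n) (ν : Fin n → ℝ) : Prop :=
  (∀ i, 0 ≤ ν i) ∧ Antitone ν ∧
    ∃ e f : OrthonormalBasis (Fin n) ℂ (Vec n), ∀ i, T (e i) = (ν i : ℂ) • f i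

/-- `p_t`, the elementary symmetric polynomial of degree `t` in `m` variables. -/
def esymm {R : Type*} [CommSemiring R] (m t : ℕ) (x : Fin m → R) : R :=
  ∑ s ∈ Finset.powersetCard t Finset.univ, ∏ i ∈ s, x i

/-- `multFun α i = |α⁻¹(i)|`, the multiplicity function of `α ∈ Γ_{m,n}`, whose nonzero values,
arranged decreasingly, form the multiplicity partition `μ(α)`. -/
def multFun {m n : ℕ} (α : Fin m → Fin n) : Fin n → ℕ :=
  fun i => (Finset.univ.filter fun j => α j = i).card

/-- The (antitone) partition `π` majorizes the multiplicity list `c` (i.e. `μ ⪯ π` where `μ` is the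
decreasing rearrangement of `c`): for every `s`, the sum of any `s` values of `c` is at most
`π 0 + ⋯ + π (s-1)`. -/
def MajorizesMult {n : ℕ} (π : Fin n → ℕ) (c : Fin n → ℕ) : Prop :=
  ∀ A : Finset (Fin n),
    ∑ i ∈ A, c i ≤ ∑ j ∈ Finset.univ.filter (fun j : Fin n => (j : ℕ) < A.card), π j

/-- `w = ω(π) ∈ Γ_{m,n}`: the nondecreasing map taking each value `i` with multiplicity `π i`. -/
def IsOmega {m n : ℕ} (π : Fin n → ℕ) (w : Fin m → Fin n) : Prop :=
  Monotone w ∧ ∀ i, (Finset.univ.filter fun j => w j = i).card = π i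

/-- The condition `Ω_χ = {α : π majorizes μ(α)}`, i.e. for every `α ∈ Γ_{m,n}`,
`∑_{σ ∈ G_α} χ(σ) ≠ 0` iff `π` majorizes the multiplicity partition `μ(α)`; it holds exactly when
`π` is the partition of `m` canonically associated with the irreducible character `χ`. -/
def OmegaChiCondition {m n : ℕ} (χ : Equiv.Perm (Fin m) → ℂ) (π : Fin n → ℕ) : Prop :=
  ∀ α : Fin m → Fin n,
    (∑ σ ∈ Finset.univ.filter (fun σ : Equiv.Perm (Fin m) => α ∘ σ = α), χ σ) ≠ 0 ↔
      MajorizesMult π (multFun α)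

/-- A linear operator on a subspace `S` of `⊗^m V` is positive semidefinite
(for the inner product inherited from `⊗^m V`). -/
def IsPSDOn {n m : ℕ} (S : Submodule ℂ (TVec n m)) (A : S →L[ℂ] S) : Prop :=
  (∀ x y : S,
      (inner ℂ ((A x : TVec n m)) (y : TVec n m) : ℂ) = inner ℂ (x : TVec n m) ((A y : TVec n m))) ∧
  ∀ x : S, 0 ≤ (inner ℂ ((A x : TVec n m)) (x : TVec n m) : ℂ).re

/-- `⊗^m_S P`: the tensor product `X^1 ⊗ ⋯ ⊗ X^m` in which `X^i = P` for `i ∈ S` and `X^i = I`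
otherwise.  (A subset `S` of `{1,…,m}` of size `m-k` corresponds to the strictly increasing map
`β ∈ Q_{m-k,m}` enumerating it, so this realizes `⊗^m_β P`.) -/
def tensorSel {n m : ℕ} (S : Finset (Fin m)) (P : Op n) : TOp n m :=
  tensorFam fun i => if i ∈ S then P else 1

/-- The pure tensor `v_1 ⊗ ⋯ ⊗ v_m` in the coordinate model of `⊗^m V`. -/
def tensorVec {n m : ℕ} (v : Fin m → Vec n) : TVec n m :=
  (WithLp.equiv 2 ((Fin m → Fin n) → ℂ)).symm fun α => ∏ i, v i (α i)

/-- The decomposable symmetrized tensor `v_1 ∗ ⋯ ∗ v_m = K_χ(v_1 ⊗ ⋯ ⊗ v_m)`,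
as an element of `V_χ`. -/
def estarVec (n m : ℕ) (χ : Equiv.Perm (Fin m) → ℂ) (v : Fin m → Vec n) : symClass n m χ :=
  ⟨Kproj n m χ (tensorVec v), LinearMap.mem_range.mpr ⟨tensorVec v, rfl⟩⟩

/-!
`⊗^m T` commutes with every `P(σ)`, so on `V_χ` the operator `K_χ(T)` sends `K_χ v` to
`K_χ ((⊗^m T) v)`. Hence `T ↦ K_χ(T) (K_χ v)` is the restriction to the diagonal of the continuous
multilinear map `(T_1, …, T_m) ↦ K_χ ((T_1 ⊗ ⋯ ⊗ T_m) v)`, whose `k`-th derivative at `P` in the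
direction `(H, …, H)` is `k!` times the sum, over the `k`-subsets `s` of `{1, …, m}`, of its value
at the family equal to `H` on `s` and to `P` off `s`. For `H = I` and
`v = e_{α(1)} ⊗ ⋯ ⊗ e_{α(m)}` that value is `(∏_{i ∉ s} ν_{α(i)}) K_χ v`, and the sum over `s` of
these products is `p_{m-k}(ν_α)`.
-/

open Finset

theorem Finset.card_filter_map_univ_eq_factorial {ι : Type*} [Fintype ι] [DecidableEq ι]
    {k : ℕ} {s : Finset ι} (hs : #s = k) :
    #{e : Fin k ↪ ι | univ.map e = s} = k.factorial := by
  have hfiber (e : Fin k ↪ ι) : univ.map e = s ↔ ∀ i, e i ∈ (s : Set ι) := by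
    refine ⟨fun h i => h ▸ mem_map_of_mem e (mem_univ i), fun h => ?_⟩
    refine eq_of_subset_of_card_le (fun x hx => ?_) (by simp [hs])
    obtain ⟨i, -, rfl⟩ := mem_map.mp hx
    exact h i
  rw [← Fintype.card_subtype, Fintype.card_congr ((Equiv.subtypeEquivRight hfiber).trans
    (Equiv.codRestrict (Fin k) (s : Set ι))), Fintype.card_embedding_eq]
  simp [hs, Nat.descFactorial_self]

theorem Finset.sum_embedding_map_univ_eq_factorial_smul {ι M : Type*} [Fintype ι]
    [DecidableEq ι] [AddCommMonoid M] (k : ℕ) (g : Finset ι → M) :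
    ∑ e : Fin k ↪ ι, g (univ.map e) = k.factorial • ∑ s ∈ powersetCard k univ, g s := by
  rw [← sum_fiberwise_of_maps_to (t := powersetCard k univ) (g := fun e => univ.map e)
    (fun e _ => by simp), smul_sum]
  refine sum_congr rfl fun s hs => ?_
  rw [sum_congr rfl fun e he => congrArg g (mem_filter.mp he).2, sum_const,
    card_filter_map_univ_eq_factorial (mem_powersetCard_univ.mp hs)]

theorem esymm_sub_eq_sum_prod_compl {R : Type*} [CommSemiring R] {m k : ℕ} (hkm : k ≤ m)
    (x : Fin m → R) :
    esymm m (m - k) x = ∑ s ∈ powersetCard k univ, ∏ i ∈ sᶜ, x i := by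
  rw [esymm]
  refine sum_nbij' compl compl (fun s hs => ?_) (fun s hs => ?_) (fun s _ => compl_compl s)
    (fun s _ => compl_compl s) (fun s _ => by rw [compl_compl])
  · simp_all [card_compl]; omega
  · simp_all [card_compl]

theorem ContinuousMultilinearMap.iteratedFDeriv_comp_diagonal_const
    {𝕜 ι E F : Type*} [NontriviallyNormedField 𝕜] [Fintype ι] [DecidableEq ι]
    [NormedAddCommGroup E] [NormedSpace 𝕜 E] [NormedAddCommGroup F] [NormedSpace 𝕜 F]
    (f : ContinuousMultilinearMap 𝕜 (fun _ : ι => E) F) (k : ℕ) (x h : E) :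
    iteratedFDeriv 𝕜 k (fun y ↦ f fun _ ↦ y) x (fun _ ↦ h) =
      k.factorial • ∑ s ∈ powersetCard k univ, f (s.piecewise (fun _ ↦ h) (fun _ ↦ x)) := by
  let g : E →L[𝕜] (ι → E) := ContinuousLinearMap.pi fun _ ↦ ContinuousLinearMap.id 𝕜 E
  change iteratedFDeriv 𝕜 k (f ∘ g) x _ = _
  rw [g.iteratedFDeriv_comp_right f.contDiff _ le_top, f.iteratedFDeriv_eq,
    ← sum_embedding_map_univ_eq_factorial_smul]
  simp only [ContinuousMultilinearMap.iteratedFDeriv,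
    ContinuousMultilinearMap.compContinuousLinearMap_apply, _root_.sum_apply,
    ContinuousMultilinearMap.iteratedFDerivComponent_apply, Pi.compRightL_apply]
  congr! with e _ i
  have hmem : i ∈ univ.map e ↔ i ∈ Set.range e := by simp
  simp only [Finset.piecewise, hmem, dite_eq_ite]
  split_ifs <;> rfl

theorem Matrix.toEuclideanCLM_apply_apply {𝕜 ι : Type*} [RCLike 𝕜] [Fintype ι] [DecidableEq ι]
    (A : Matrix ι ι 𝕜) (x : EuclideanSpace 𝕜 ι) (a : ι) :
    Matrix.toEuclideanCLM (𝕜 := 𝕜) A x a = ∑ b, A a b * x b := rfl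

section SymmetryClass

variable {n m : ℕ}

theorem apply_eq_sum_entry_mul (T : Op n) (x : Vec n) (a : Fin n) :
    T x a = ∑ b, entry T a b * x b := by
  conv_lhs => rw [← (EuclideanSpace.basisFun (Fin n) ℂ).sum_repr x]
  simp [entry, mul_comm]

theorem tensorFam_apply (T : Fin m → Op n) (x : TVec n m) (γ : Fin m → Fin n) :
    tensorFam T x γ = ∑ β, (∏ i, entry (T i) (γ i) (β i)) * x β := rfl

def entryCLM (n : ℕ) (a b : Fin n) : Op n →L[ℂ] ℂ :=
  (EuclideanSpace.proj a).comp (ContinuousLinearMap.apply ℂ (Vec n) (EuclideanSpace.single b 1))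

/-- `tensorFamMultilinear n m T` is `tensorFam T` by definition. -/
def tensorFamMultilinear (n m : ℕ) :
    ContinuousMultilinearMap ℂ (fun _ : Fin m => Op n) (TOp n m) :=
  LinearMap.toContinuousLinearMap
      ((Matrix.toEuclideanCLM (𝕜 := ℂ)).toAlgEquiv.toLinearEquiv.toLinearMap ∘ₗ
        (Matrix.ofLinearEquiv ℂ).toLinearMap) |>.compContinuousMultilinearMap <|
    ContinuousMultilinearMap.pi fun α => ContinuousMultilinearMap.pi fun β =>
      (ContinuousMultilinearMap.mkPiAlgebra ℂ (Fin m) ℂ).compContinuousLinearMap fun i =>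
        entryCLM n (α i) (β i)

theorem permOp_apply (σ : Equiv.Perm (Fin m)) (x : TVec n m) (γ : Fin m → Fin n) :
    permOp n m σ x γ = x (γ ∘ σ) := by
  simp [permOp, Matrix.toEuclideanCLM_apply_apply]

theorem tensorVec_apply (v : Fin m → Vec n) (β : Fin m → Fin n) :
    tensorVec v β = ∏ i, v i (β i) := rfl

theorem tensorFam_tensorVec (T : Fin m → Op n) (w : Fin m → Vec n) :
    tensorFam T (tensorVec w) = tensorVec fun i => T i (w i) := by
  ext γ
  simp only [tensorFam_apply, tensorVec_apply, apply_eq_sum_entry_mul, ← prod_mul_distrib]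
  exact (Fintype.prod_sum fun i b => entry (T i) (γ i) b * w i b).symm

theorem tensorVec_smul (c : Fin m → ℂ) (w : Fin m → Vec n) :
    tensorVec (fun i => c i • w i) = (∏ i, c i) • tensorVec w := by
  ext β
  simp [tensorVec_apply, prod_mul_distrib]

theorem tensorFam_tensorVec_of_apply_eq_smul {T : Fin m → Op n} {w : Fin m → Vec n}
    {c : Fin m → ℂ} (hT : ∀ i, T i (w i) = c i • w i) :
    tensorFam T (tensorVec w) = (∏ i, c i) • tensorVec w := by
  simp only [tensorFam_tensorVec, hT, tensorVec_smul]

theorem tensorPow_permOp (T : Op n) (σ : Equiv.Perm (Fin m)) (x : TVec n m) :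
    tensorPow n m T (permOp n m σ x) = permOp n m σ (tensorPow n m T x) := by
  ext γ
  simp only [tensorPow, tensorFam_apply, permOp_apply]
  refine Fintype.sum_equiv (σ.symm.arrowCongr (.refl _)) _ _ fun β => ?_
  rw [← Equiv.prod_comp σ]
  rfl

theorem tensorPow_Kproj (χ : Equiv.Perm (Fin m) → ℂ) (T : Op n) (v : TVec n m) :
    tensorPow n m T (Kproj n m χ v) = Kproj n m χ (tensorPow n m T v) := by
  simp only [Kproj, smul_apply, _root_.sum_apply, map_smul, map_sum, tensorPow_permOp]

theorem coe_Kmap_apply (χ : Equiv.Perm (Fin m) → ℂ) (T : Op n) {x : symClass n m χ}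
    {v : TVec n m} (hx : (x : TVec n m) = Kproj n m χ v) :
    (Kmap n m χ T x : TVec n m) = Kproj n m χ (tensorPow n m T v) := by
  have hmem : Kproj n m χ (tensorPow n m T v) ∈ symClass n m χ := ⟨_, rfl⟩
  simp only [Kmap, ContinuousLinearMap.comp_apply, Submodule.subtypeL_apply, hx,
    tensorPow_Kproj]
  exact congrArg Subtype.val (Submodule.orthogonalProjectionOnto_mem_subspace_eq_self ⟨_, hmem⟩)

theorem contDiff_Kmap (χ : Equiv.Perm (Fin m) → ℂ) : ContDiff ℂ ⊤ (Kmap n m χ) :=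
  have contDiff_tensorPow : ContDiff ℂ ⊤ (tensorPow n m) :=
    (tensorFamMultilinear n m).contDiff.comp (contDiff_pi.2 fun _ => contDiff_id)
  contDiff_const.clm_comp (contDiff_tensorPow.clm_comp contDiff_const)

theorem coe_iteratedFDeriv_Kmap_apply (χ : Equiv.Perm (Fin m) → ℂ) (k : ℕ) (P H : Op n)
    {x : symClass n m χ} {v : TVec n m} (hx : (x : TVec n m) = Kproj n m χ v) :
    (iteratedFDeriv ℂ k (Kmap n m χ) P (fun _ => H) x : TVec n m) =
      k.factorial • ∑ s ∈ powersetCard k univ,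
        Kproj n m χ (tensorFam (s.piecewise (fun _ => H) (fun _ => P)) v) := by
  let evalAt : (symClass n m χ →L[ℂ] symClass n m χ) →L[ℂ] TVec n m :=
    (symClass n m χ).subtypeL.comp (ContinuousLinearMap.apply ℂ _ x)
  let g : ContinuousMultilinearMap ℂ (fun _ : Fin m => Op n) (TVec n m) :=
    ((Kproj n m χ).comp (ContinuousLinearMap.apply ℂ _ v)).compContinuousMultilinearMap
      (tensorFamMultilinear n m)
  have hg : evalAt ∘ Kmap n m χ = fun T => g fun _ => T := funext fun T => coe_Kmap_apply χ T hx
  calc _ = iteratedFDeriv ℂ k (evalAt ∘ Kmap n m χ) P (fun _ => H) := by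
          rw [evalAt.iteratedFDeriv_comp_left (contDiff_Kmap χ).contDiffAt le_top]; rfl
    _ = _ := by rw [hg, g.iteratedFDeriv_comp_diagonal_const]; rfl

end SymmetryClass

theorem kth_deriv_Kmap_eigenvector_general (n m k : ℕ) (hkm : k ≤ m)
    (χ : Equiv.Perm (Fin m) → ℂ)
    (P : Op n)
    (e : OrthonormalBasis (Fin n) ℂ (Vec n)) (ν : Fin n → ℝ)
    (heig : ∀ i, P (e i) = (ν i : ℂ) • e i)
    (α : Fin m → Fin n) :
    iteratedFDeriv ℂ k (Kmap n m χ) P (fun _ => (1 : Op n))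
        (estarVec n m χ fun j => e (α j)) =
      ((k.factorial : ℂ) * esymm m (m - k) fun j => (ν (α j) : ℂ)) •
        estarVec n m χ (fun j => e (α j)) := by
  classical
  set w : Fin m → Vec n := fun j => e (α j)
  have hterm (s : Finset (Fin m)) :
      tensorFam (s.piecewise (fun _ => 1) (fun _ => P)) (tensorVec w) =
        (∏ i ∈ sᶜ, (ν (α i) : ℂ)) • tensorVec w := by
    rw [tensorFam_tensorVec_of_apply_eq_smul (c := s.piecewise 1 fun i => (ν (α i) : ℂ)),
      prod_piecewise]
    · simp [compl_eq_univ_sdiff]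
    · intro i
      by_cases hi : i ∈ s <;> simp [hi, heig, w]
  apply Subtype.ext
  rw [Submodule.coe_smul, coe_iteratedFDeriv_Kmap_apply χ k P 1 rfl,
    esymm_sub_eq_sum_prod_compl hkm]
  simp only [hterm, map_smul, ← sum_smul, ← Nat.cast_smul_eq_nsmul ℂ, smul_smul]
  rfl

/-- if `P` is positive semidefinite with orthonormal eigenbasis `e_1, …, e_n` and
eigenvalues `ν_1 ≥ ⋯ ≥ ν_n`, then for every `α ∈ Γ_{m,n}`,
`D^k K_χ(P)(I,…,I) e*_α = k! · p_{m−k}(ν_α) · e*_α`; in particular, whenever `e*_α ≠ 0` it is an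
eigenvector of `D^k K_χ(P)(I,…,I)` with eigenvalue `λ(α) = k! · p_{m−k}(ν_α)`. -/
theorem kth_deriv_Kmap_eigenvector (n m k : ℕ) (hk1 : 1 ≤ k) (hkm : k ≤ m) (hmn : m ≤ n)
    (χ : Equiv.Perm (Fin m) → ℂ) (hχ : IsIrreducibleCharacter m χ)
    (P : Op n) (hPpos : P.IsPositive)
    (e : OrthonormalBasis (Fin n) ℂ (Vec n)) (ν : Fin n → ℝ) (hν : Antitone ν)
    (heig : ∀ i, P (e i) = (ν i : ℂ) • e i)
    (α : Fin m → Fin n) :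
    iteratedFDeriv ℂ k (Kmap n m χ) P (fun _ => (1 : Op n))
        (estarVec n m χ fun j => e (α j)) =
      ((k.factorial : ℂ) * esymm m (m - k) fun j => (ν (α j) : ℂ)) •
        estarVec n m χ (fun j => e (α j)) :=
  kth_deriv_Kmap_eigenvector_general n m k hkm χ P e ν heig α
end
end

section
/- Let A ∈ M_n(ℂ) and let 1 ≤ k ≤ n. Then the k-th derivative of the permanent satisfies ‖D^k per(A)‖ ≤ (n!/(n−k)!) · ‖A‖^{n−k}. -/
set_option synthInstance.maxHeartbeats 1000000
set_option maxHeartbeats 1000000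

noncomputable section

open scoped Matrix.Norms.L2Operator

/-- The immanant `d_χ(A) = ∑_{σ ∈ S_n} χ(σ) ∏_i a_{iσ(i)}` of a complex `n × n` matrix. -/
def immanant {n : ℕ} (χ : Equiv.Perm (Fin n) → ℂ) (A : Matrix (Fin n) (Fin n) ℂ) : ℂ :=
  ∑ σ : Equiv.Perm (Fin n), χ σ * ∏ i, A i (σ i)

/-- The matrix `A` has singular values `ν 0 ≥ ν 1 ≥ ⋯ ≥ ν (n-1)`. -/
def MatrixHasSingularValues {n : ℕ} (A : Matrix (Fin n) (Fin n) ℂ) (ν : Fin n → ℝ) : Prop :=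
  HasSingularValues (Matrix.toEuclideanCLM (𝕜 := ℂ) A) ν

/-!
The permanent is the diagonal restriction `A ↦ F(A, …, A)` of the symmetric `n`-linear form
`F(X₁, …, Xₙ) = (1/n!) ∑_{σ, τ} ∏ᵢ (Xᵢ)_{σ(i) τ(i)}`, and for any bounded `n`-linear form the `k`-th
derivative of its diagonal restriction at `A` has norm at most `n!/(n-k)! ‖F‖ ‖A‖^{n-k}`. So it
suffices that `‖F‖ ≤ 1`. With `u = ∑_σ e_σ` in `ℂ^(Fin n → Fin n)` one has
`n! F(X) = ⟪u, (X₁ ⊗ ⋯ ⊗ Xₙ) u⟫` and `‖u‖² = n!`, while `‖X₁ ⊗ ⋯ ⊗ Xₙ‖ ≤ ∏ ‖Xᵢ‖` because the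
Kronecker product is the product of the factors `1 ⊗ ⋯ ⊗ Xᵢ ⊗ ⋯ ⊗ 1`, each of which is, after
reordering coordinates, a block diagonal matrix with blocks `Xᵢ`.
-/

open scoped Kronecker
open WithLp Nat

namespace Matrix

section PiKronecker

variable {ι m R : Type*} [Fintype ι]

def piKronecker [CommMonoid R] (C : ι → Matrix m m R) : Matrix (ι → m) (ι → m) R :=
  of fun α β => ∏ i, C i (α i) (β i)

theorem piKronecker_mul [DecidableEq ι] [Fintype m] [CommSemiring R] (C D : ι → Matrix m m R) :
    piKronecker C * piKronecker D = piKronecker (C * D) := by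
  ext α β
  simp only [piKronecker, mul_apply, of_apply, Pi.mul_apply, ← Finset.prod_mul_distrib,
    Fintype.prod_sum]

theorem piKronecker_one [DecidableEq m] [CommSemiring R] :
    piKronecker (1 : ι → Matrix m m R) = 1 := by
  ext α β
  simp only [piKronecker, of_apply, Pi.one_apply, one_apply, Finset.prod_boole, funext_iff]
  simp

theorem reindex_piKronecker_mulSingle [DecidableEq ι] [DecidableEq m] [CommSemiring R] (i₀ : ι)
    (C : Matrix m m R) :
    reindex (Equiv.funSplitAt i₀ m) (Equiv.funSplitAt i₀ m) (piKronecker (Pi.mulSingle i₀ C)) =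
      C ⊗ₖ 1 := by
  ext ⟨a, r⟩ ⟨b, s⟩
  rw [reindex_apply, submatrix_apply, piKronecker, of_apply,
    Fintype.prod_eq_mul_prod_subtype_ne _ i₀]
  have slice_entry (j : {j // j ≠ i₀}) : Pi.mulSingle (M := fun _ => Matrix m m R) i₀ C j
      ((Equiv.funSplitAt i₀ m).symm (a, r) j) ((Equiv.funSplitAt i₀ m).symm (b, s) j) =
      if r j = s j then 1 else 0 := by
    simp [Equiv.funSplitAt, Equiv.piSplitAt_symm_apply, j.2, one_apply]
  simp only [slice_entry, Finset.prod_boole, kronecker_apply, one_apply, funext_iff]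
  simp [Equiv.funSplitAt, Equiv.piSplitAt_symm_apply]

end PiKronecker

section MixedPermanent

open Equiv

variable {K ι : Type*} [Field K] [Fintype ι] [DecidableEq ι]

variable (K ι) in
def mixedPermanent : MultilinearMap K (fun _ : ι => Matrix ι ι K) K :=
  ((Fintype.card ι)! : K)⁻¹ • ∑ σ : Perm ι, ∑ τ : Perm ι,
    (MultilinearMap.mkPiAlgebra K ι K).compLinearMap fun i => entryLinearMap K K (σ i) (τ i)

theorem mixedPermanent_apply (C : ι → Matrix ι ι K) :
    mixedPermanent K ι C =
      ((Fintype.card ι)! : K)⁻¹ * ∑ σ : Perm ι, ∑ τ : Perm ι, ∏ i, C i (σ i) (τ i) := by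
  simp [mixedPermanent]

theorem mixedPermanent_apply_const [CharZero K] (A : Matrix ι ι K) :
    mixedPermanent K ι (fun _ => A) = A.permanent := by
  have row_sum (σ : Perm ι) : ∑ τ : Perm ι, ∏ i, A (σ i) (τ i) = A.permanent := by
    rw [← permanent_permute_cols σ A, ← permanent_transpose]
    rfl
  simp only [mixedPermanent_apply, row_sum, Finset.sum_const, Finset.card_univ,
    Fintype.card_perm, nsmul_eq_mul]
  exact inv_mul_cancel_left₀ (Nat.cast_ne_zero.2 (factorial_ne_zero _)) _

end MixedPermanent

section L2OpNorm

variable {𝕜 ι m n : Type*} [RCLike 𝕜] [Fintype m] [Fintype n] [DecidableEq m] [DecidableEq n]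

theorem l2_opNorm_reindex (e : m ≃ n) (M : Matrix m m 𝕜) : ‖reindex e e M‖ = ‖M‖ := by
  let L := LinearIsometryEquiv.piLpCongrLeft 2 𝕜 𝕜 e
  have h : toEuclideanCLM (𝕜 := 𝕜) (reindex e e M) =
      (L : EuclideanSpace 𝕜 m →L[𝕜] EuclideanSpace 𝕜 n).comp
        ((toEuclideanCLM (𝕜 := 𝕜) M).comp
          (L.symm : EuclideanSpace 𝕜 n →L[𝕜] EuclideanSpace 𝕜 m)) := by
    ext x i
    simp [L, submatrix_mulVec_equiv, Equiv.piCongrLeft']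
    rfl
  rw [← l2_opNorm_toEuclideanCLM, h, ContinuousLinearMap.opNorm_linearIsometryEquiv_comp,
    ContinuousLinearMap.opNorm_comp_linearIsometryEquiv, l2_opNorm_toEuclideanCLM]

theorem l2_opNorm_kronecker_one_le (C : Matrix m m 𝕜) : ‖C ⊗ₖ (1 : Matrix n n 𝕜)‖ ≤ ‖C‖ := by
  rw [← l2_opNorm_toEuclideanCLM]
  refine ContinuousLinearMap.opNorm_le_bound _ (norm_nonneg C) fun x => ?_
  let slice (v : EuclideanSpace 𝕜 (m × n)) (r : n) : EuclideanSpace 𝕜 m :=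
    toLp 2 fun a => v (a, r)
  have norm_sq_eq (v : EuclideanSpace 𝕜 (m × n)) : ‖v‖ ^ 2 = ∑ r, ‖slice v r‖ ^ 2 := by
    simp only [EuclideanSpace.norm_sq_eq, Fintype.sum_prod_type, slice]
    exact Finset.sum_comm
  have slice_apply (r : n) :
      slice (toEuclideanCLM (𝕜 := 𝕜) (C ⊗ₖ 1) x) r = toEuclideanCLM (𝕜 := 𝕜) C (slice x r) := by
    ext a
    simp [slice, mulVec, dotProduct, Fintype.sum_prod_type, one_apply]
  refine (sq_le_sq₀ (by positivity) (by positivity)).mp ?_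
  calc ‖toEuclideanCLM (𝕜 := 𝕜) (C ⊗ₖ 1) x‖ ^ 2
      = ∑ r, ‖toEuclideanCLM (𝕜 := 𝕜) C (slice x r)‖ ^ 2 := by
        simp only [norm_sq_eq, slice_apply]
    _ ≤ ∑ r, (‖C‖ * ‖slice x r‖) ^ 2 := by gcongr; exact ContinuousLinearMap.le_opNorm _ _
    _ = (‖C‖ * ‖x‖) ^ 2 := by simp only [mul_pow, norm_sq_eq x, Finset.mul_sum]

variable [Fintype ι] [DecidableEq ι]

theorem l2_opNorm_piKronecker_mulSingle_le (i₀ : ι) (C : Matrix m m 𝕜) :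
    ‖piKronecker (Pi.mulSingle i₀ C)‖ ≤ ‖C‖ := by
  rw [← l2_opNorm_reindex (Equiv.funSplitAt i₀ m), reindex_piKronecker_mulSingle]
  exact l2_opNorm_kronecker_one_le C

theorem l2_opNorm_piKronecker_le (C : ι → Matrix m m 𝕜) : ‖piKronecker C‖ ≤ ∏ i, ‖C i‖ := by
  suffices ∀ s : Finset ι, ‖piKronecker (s.piecewise C 1)‖ ≤ ∏ i ∈ s, ‖C i‖ by
    simpa using this Finset.univ
  intro s
  induction s using Finset.induction_on with
  | empty =>
    rw [Finset.piecewise_empty, piKronecker_one, Finset.prod_empty, ← l2_opNorm_toEuclideanCLM,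
      map_one]
    exact ContinuousLinearMap.norm_id_le
  | insert a s ha ih =>
    have split : (insert a s).piecewise C 1 = Pi.mulSingle a (C a) * s.piecewise C 1 := by
      ext1 j
      by_cases hj : j = a
      · subst hj; simp [ha]
      · simp [hj, Finset.piecewise_insert_of_ne]
    rw [split, ← piKronecker_mul, Finset.prod_insert ha]
    exact (l2_opNorm_mul _ _).trans <|
      mul_le_mul (l2_opNorm_piKronecker_mulSingle_le a (C a)) ih (norm_nonneg _) (norm_nonneg _)

theorem norm_sum_sum_apply_le_card_mul_l2_opNorm {β : Type*} [Fintype β] {f : β → m}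
    (hf : Function.Injective f) (M : Matrix m m 𝕜) :
    ‖∑ x, ∑ y, M (f x) (f y)‖ ≤ Fintype.card β * ‖M‖ := by
  let T := toEuclideanCLM (𝕜 := 𝕜) M
  let u : EuclideanSpace 𝕜 m := ∑ x, EuclideanSpace.single (f x) 1
  have inner_single_T (a b : m) :
      inner 𝕜 (EuclideanSpace.single a (1 : 𝕜)) (T (EuclideanSpace.single b 1)) = M a b := by
    simp [T, EuclideanSpace.inner_single_left, mulVec, dotProduct]
  have inner_u_T : inner 𝕜 u (T u) = ∑ x, ∑ y, M (f x) (f y) := by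
    simp only [u, map_sum, inner_sum, sum_inner, inner_single_T]
    exact Finset.sum_comm
  have norm_u_sq : ‖u‖ ^ 2 = Fintype.card β := by
    have inner_u_u : inner 𝕜 u u = (Fintype.card β : 𝕜) := by
      classical
      simp only [u, inner_sum, sum_inner, EuclideanSpace.inner_single_left, PiLp.single_apply,
        hf.eq_iff]
      simp
    rw [← RCLike.ofReal_inj (K := 𝕜), RCLike.ofReal_pow, ← inner_self_eq_norm_sq_to_K, inner_u_u]
    simp
  calc ‖∑ x, ∑ y, M (f x) (f y)‖ = ‖inner 𝕜 u (T u)‖ := by rw [inner_u_T]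
    _ ≤ ‖u‖ * (‖T‖ * ‖u‖) := (norm_inner_le_norm _ _).trans (by gcongr; exact T.le_opNorm u)
    _ = Fintype.card β * ‖M‖ := by rw [← norm_u_sq, l2_opNorm_toEuclideanCLM]; ring

theorem norm_sum_perm_sum_perm_prod_le (C : ι → Matrix ι ι 𝕜) :
    ‖∑ σ : Equiv.Perm ι, ∑ τ : Equiv.Perm ι, ∏ i, C i (σ i) (τ i)‖ ≤
      (Fintype.card ι)! * ∏ i, ‖C i‖ :=
  calc _ ≤ Fintype.card (Equiv.Perm ι) * ‖piKronecker C‖ :=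
        norm_sum_sum_apply_le_card_mul_l2_opNorm DFunLike.coe_injective (piKronecker C)
    _ ≤ _ := by rw [Fintype.card_perm]; gcongr; exact l2_opNorm_piKronecker_le C

theorem norm_mixedPermanent_apply_le (C : ι → Matrix ι ι 𝕜) :
    ‖mixedPermanent 𝕜 ι C‖ ≤ 1 * ∏ i, ‖C i‖ := by
  rw [mixedPermanent_apply, norm_mul, norm_inv, RCLike.norm_natCast, one_mul,
    inv_mul_le_iff₀ (by positivity)]
  exact norm_sum_perm_sum_perm_prod_le C

variable (𝕜 ι) in
def mixedPermanentL : ContinuousMultilinearMap 𝕜 (fun _ : ι => Matrix ι ι 𝕜) 𝕜 :=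
  (mixedPermanent 𝕜 ι).mkContinuous 1 norm_mixedPermanent_apply_le

theorem norm_mixedPermanentL_le : ‖mixedPermanentL 𝕜 ι‖ ≤ 1 :=
  (mixedPermanent 𝕜 ι).mkContinuous_norm_le zero_le_one norm_mixedPermanent_apply_le

theorem mixedPermanentL_apply_const (A : Matrix ι ι 𝕜) :
    mixedPermanentL 𝕜 ι (fun _ => A) = A.permanent :=
  mixedPermanent_apply_const A

end L2OpNorm

end Matrix

theorem ContinuousMultilinearMap.norm_iteratedFDeriv_apply_const_le {𝕜 ι E F : Type*}
    [NontriviallyNormedField 𝕜] [Fintype ι] [NormedAddCommGroup E] [NormedSpace 𝕜 E]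
    [NormedAddCommGroup F] [NormedSpace 𝕜 F] (f : ContinuousMultilinearMap 𝕜 (fun _ : ι => E) F)
    (k : ℕ) (x : E) :
    ‖iteratedFDeriv 𝕜 k (fun y => f fun _ => y) x‖ ≤
      (Fintype.card ι).descFactorial k * ‖f‖ * ‖x‖ ^ (Fintype.card ι - k) := by
  let diag : E →L[𝕜] ι → E := ContinuousLinearMap.pi fun _ => ContinuousLinearMap.id 𝕜 E
  have norm_diag : ‖diag‖ ≤ 1 :=
    ContinuousLinearMap.opNorm_le_bound _ zero_le_one fun y => by
      rw [one_mul]; exact pi_norm_const_le y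
  have hf : (fun y => f fun _ => y) = f ∘ diag := rfl
  rw [hf, diag.iteratedFDeriv_comp_right f.contDiff x le_top]
  calc _ ≤ ‖iteratedFDeriv 𝕜 k f (diag x)‖ * ∏ _ : Fin k, ‖diag‖ :=
        ContinuousMultilinearMap.norm_compContinuousLinearMap_le _ _
    _ ≤ ‖iteratedFDeriv 𝕜 k f (diag x)‖ := by
        apply mul_le_of_le_one_right (norm_nonneg _)
        exact Finset.prod_le_one (fun _ _ => norm_nonneg _) fun _ _ => norm_diag
    _ ≤ _ := (f.norm_iteratedFDeriv_le k (diag x)).trans (by gcongr; exact pi_norm_const_le x)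

theorem Nat.cast_descFactorial_le_div_factorial (n k : ℕ) :
    (n.descFactorial k : ℝ) ≤ n ! / (n - k)! := by
  rcases le_or_gt k n with hkn | hnk
  · rw [Nat.descFactorial_eq_div hkn]
    exact Nat.cast_div_le
  · rw [Nat.descFactorial_of_lt hnk, Nat.cast_zero]
    positivity

theorem immanant_one_eq_permanent {n : ℕ} (A : Matrix (Fin n) (Fin n) ℂ) :
    immanant (fun _ => 1) A = A.permanent := by
  rw [← Matrix.permanent_transpose]
  simp [immanant, Matrix.permanent]

theorem norm_kth_deriv_permanent_le_general (n k : ℕ)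
    (A : Matrix (Fin n) (Fin n) ℂ) :
    ‖iteratedFDeriv ℂ k (immanant fun _ => (1 : ℂ)) A‖ ≤
      ((n.factorial : ℝ) / ((n - k).factorial : ℝ)) * ‖A‖ ^ (n - k) := by
  have immanant_eq :
      (immanant fun _ => (1 : ℂ)) = fun B => Matrix.mixedPermanentL ℂ (Fin n) fun _ => B :=
    funext fun B => by rw [immanant_one_eq_permanent, Matrix.mixedPermanentL_apply_const]
  rw [immanant_eq]
  calc _ ≤ n.descFactorial k * ‖Matrix.mixedPermanentL ℂ (Fin n)‖ * ‖A‖ ^ (n - k) := by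
        simpa only [Fintype.card_fin] using
          (Matrix.mixedPermanentL ℂ (Fin n)).norm_iteratedFDeriv_apply_const_le k A
    _ ≤ n ! / (n - k)! * 1 * ‖A‖ ^ (n - k) := by
        gcongr
        · exact Nat.cast_descFactorial_le_div_factorial n k
        · exact Matrix.norm_mixedPermanentL_le
    _ = _ := by rw [mul_one]

/-- `‖D^k per(A)‖ ≤ (n!/(n−k)!) ‖A‖^{n−k}` for `1 ≤ k ≤ n`, where the permanent is
the immanant associated with the trivial character. -/
theorem norm_kth_deriv_permanent_le (n k : ℕ) (hk1 : 1 ≤ k) (hkn : k ≤ n)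
    (A : Matrix (Fin n) (Fin n) ℂ) :
    ‖iteratedFDeriv ℂ k (immanant fun _ => (1 : ℂ)) A‖ ≤
      ((n.factorial : ℝ) / ((n - k).factorial : ℝ)) * ‖A‖ ^ (n - k) :=
  norm_kth_deriv_permanent_le_general n k A

end
end
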